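/- arXiv:1902.00766 — 4 statements merged into one kernel-verified Lean document; each statement's English description precedes it below -/
import Mathlib

section
/- If all components of r are the negative essential infimum, r_i(ξ) = −ess inf ξ, then for any essentially bounded random lower closed set X, the selection risk measure ρ_s(X) equals the set of fixed points of −X, that is, ρ_s(X) = {x : P(−x ∈ X) = 1} = −F_X. -/
open MeasureTheory Pointwise Filter
open scoped ENNReal NNReal

noncomputable section

variable {Ω : Type*}

/-- The family of `p`-integrable selections of a random set `X`. -/
def Sel [MeasurableSpace Ω] (μ : Measure Ω) (p : ℝ≥0∞) {d : ℕ}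
    (X : Ω → Set (Fin d → ℝ)) : Set (Ω → Fin d → ℝ) :=
  {ξ | MemLp ξ p μ ∧ ∀ᵐ ω ∂μ, ξ ω ∈ X ω}

/-- The selection risk measure `ρ_s(X) = cl ⋃_{ξ ∈ L^p(X)} (r(ξ) + ℝ_+^d)`. -/
def selRisk [MeasurableSpace Ω] (μ : Measure Ω) (p : ℝ≥0∞) {d : ℕ}
    (r : Fin d → (Ω → ℝ) → ℝ) (X : Ω → Set (Fin d → ℝ)) : Set (Fin d → ℝ) :=
  closure (⋃ ξ ∈ Sel μ p X, {x | ∀ i, r i (fun ω => ξ ω i) ≤ x i})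

/-
An essentially bounded selection `ξ` of `X` dominates, almost surely, the vector
`(ess inf ξ⁽¹⁾, …, ess inf ξ⁽ᵈ⁾)`, so every `x ≥ r(ξ)` has `-x ≤ ξ` a.s. and, `X` being a lower
set, `-x ∈ X` a.s.  Hence the union defining `ρ_s(X)` lies in `-F_X`, which is closed because
`X` has closed values (an a.s. statement about a convergent sequence is an a.s. statement about
all of its terms).  Conversely, for `y ∈ F_X` the constant `-y` is a bounded selection with
`r(-y) = y`.
-/

section

variable [MeasurableSpace Ω] {μ : Measure Ω}

theorem isClosed_setOf_ae_mem {E : Type*} [TopologicalSpace E] [SequentialSpace E]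
    {X : Ω → Set E} (hX : ∀ ω, IsClosed (X ω)) : IsClosed {x | ∀ᵐ ω ∂μ, x ∈ X ω} := by
  refine IsSeqClosed.isClosed fun u x hu hux => ?_
  filter_upwards [ae_all_iff.mpr hu] with ω hω
  exact (hX ω).mem_of_tendsto hux (Eventually.of_forall hω)

theorem MeasureTheory.MemLp.ae_essInf_le {f : Ω → ℝ} (hf : MemLp f ∞ μ) : ∀ᵐ ω ∂μ, essInf f μ ≤ f ω := by
  have hbdd : IsBoundedUnder (· ≤ ·) (ae μ) fun ω => ‖f ω‖₊ := by
    rw [← eLpNormEssSup_lt_top_iff_isBoundedUnder, ← eLpNorm_exponent_top]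
    exact hf.2
  obtain ⟨C, hC⟩ := hbdd
  refine _root_.ae_essInf_le ⟨-(C : ℝ), eventually_map.mpr ?_⟩
  filter_upwards [hC] with ω hω
  have : |f ω| ≤ C := by simpa [← NNReal.coe_le_coe] using hω
  exact (abs_le.mp this).1

theorem selRisk_essInf_subset_neg {d : ℕ} {X : Ω → Set (Fin d → ℝ)}
    (hX : ∀ ω, IsClosed (X ω) ∧ IsLowerSet (X ω)) :
    selRisk μ ∞ (fun _ ξ => -(essInf ξ μ)) X ⊆ -{x | ∀ᵐ ω ∂μ, x ∈ X ω} := by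
  refine closure_minimal ?_ (isClosed_setOf_ae_mem fun ω => (hX ω).1).neg
  simp only [Set.iUnion_subset_iff]
  rintro ξ ⟨hξ, hξX⟩ x hx
  have hξ_ge : ∀ᵐ ω ∂μ, ∀ i, essInf (fun ω => ξ ω i) μ ≤ ξ ω i :=
    ae_all_iff.mpr fun i => (hξ.eval i).ae_essInf_le
  filter_upwards [hξ_ge, hξX] with ω hω hωX
  exact (hX ω).2 (fun i => show -x i ≤ ξ ω i by linarith [hx i, hω i]) hωX

theorem neg_setOf_ae_mem_subset_selRisk_essInf [IsFiniteMeasure μ] [NeZero μ] {d : ℕ}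
    (X : Ω → Set (Fin d → ℝ)) :
    -{x | ∀ᵐ ω ∂μ, x ∈ X ω} ⊆ selRisk μ ∞ (fun _ ξ => -(essInf ξ μ)) X := by
  intro y hy
  refine subset_closure (Set.mem_biUnion (x := fun _ => -y) ⟨memLp_const _, hy⟩ fun i => ?_)
  simp [essInf_const']

end

theorem stmt7_general [MeasurableSpace Ω] (μ : Measure Ω) [IsProbabilityMeasure μ] {d : ℕ}
    (X : Ω → Set (Fin d → ℝ))
    (hXc : ∀ ω, IsClosed (X ω) ∧ IsLowerSet (X ω)) :
    selRisk μ ∞ (fun _ ξ => -(essInf ξ μ)) X = -{x : Fin d → ℝ | ∀ᵐ ω ∂μ, x ∈ X ω} :=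
  (selRisk_essInf_subset_neg hXc).antisymm (neg_setOf_ae_mem_subset_selRisk_essInf X)

theorem stmt7 [MeasurableSpace Ω] (μ : Measure Ω) [IsProbabilityMeasure μ] {d : ℕ}
    (X : Ω → Set (Fin d → ℝ))
    (hXc : ∀ ω, IsClosed (X ω) ∧ IsLowerSet (X ω))
    (hXi : (Sel μ ∞ X).Nonempty) :
    selRisk μ ∞ (fun _ ξ => -(essInf ξ μ)) X = -{x : Fin d → ℝ | ∀ᵐ ω ∂μ, x ∈ X ω} :=
  stmt7_general μ X hXc
end
end

section
/- Let Ω = {ω_1,...,ω_n} be a finite probability space with all atoms of probability at least α, and let all components of r be the Average Value-at-Risk at level α. Then for any random lower closed set X in R^d one has ρ_s(X) = −F_X = −∩_{i=1}^n X(ω_i). -/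
/-! On a finite space whose atoms all carry mass at least `α`, the lower `α`-tail of any
`ξ` lies inside the atom of its minimiser, so the quantile function is constant equal to
`min ξ` on `(0, α]` and `AVaR_α(ξ) = -min ξ`. Since no atom is null, selections are pointwise
selections, and `AVaR_α(ξ) ≤ x` in every coordinate says that `-x` lies below every `ξ(ω)`;
as the values `X(ω)` are lower sets this puts `-x` in `⋂ X(ω)`, and constant selections
give the converse. -/

open MeasureTheory Pointwise Filter
open scoped ENNReal NNReal

noncomputable section

variable {Ω : Type*}

/-- The (left-continuous) quantile function `F_ξ^{-1}(t) = inf {x : F_ξ(x) ≥ t}`. -/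
def qtl [MeasurableSpace Ω] (μ : Measure Ω) (ξ : Ω → ℝ) (t : ℝ) : ℝ :=
  sInf {x | t ≤ (μ {ω | ξ ω ≤ x}).toReal}

/-- The Average Value-at-Risk at level `α`. -/
def avar [MeasurableSpace Ω] (μ : Measure Ω) (α : ℝ) (ξ : Ω → ℝ) : ℝ :=
  -((1 / α) * ∫ t in (0:ℝ)..α, qtl μ ξ t)

section Atoms

variable [MeasurableSpace Ω] {μ : Measure Ω}

lemma forall_of_ae_of_le_measure_singleton {α : ℝ} (hα : 0 < α)
    (hatom : ∀ ω : Ω, α ≤ (μ {ω}).toReal) [Countable Ω] {P : Ω → Prop}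
    (h : ∀ᵐ ω ∂μ, P ω) (ω : Ω) : P ω := by
  refine ae_iff_of_countable.mp h ω fun h0 => ?_
  have := hatom ω
  rw [h0, ENNReal.toReal_zero] at this
  linarith

section Quantile

variable [IsFiniteMeasure μ] {ξ : Ω → ℝ} {ω₀ : Ω}

lemma qtl_eq_of_forall_le (hmin : ∀ ω, ξ ω₀ ≤ ξ ω) {t : ℝ} (ht0 : 0 < t)
    (ht : t ≤ (μ {ω₀}).toReal) : qtl μ ξ t = ξ ω₀ := by
  suffices {x | t ≤ (μ {ω | ξ ω ≤ x}).toReal} = Set.Ici (ξ ω₀) by rw [qtl, this, csInf_Ici]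
  ext x
  refine ⟨fun hx => ?_, fun hx => ?_⟩
  · by_contra! hlt
    rw [Set.mem_Ici, not_le] at hlt
    have hempty : {ω | ξ ω ≤ x} = ∅ :=
      Set.eq_empty_of_forall_notMem fun ω hω => (hlt.trans_le (hmin ω)).not_ge hω
    rw [Set.mem_ofPred_eq, hempty, measure_empty, ENNReal.toReal_zero] at hx
    linarith
  · have hsub : {ω₀} ⊆ {ω | ξ ω ≤ x} := Set.singleton_subset_iff.mpr hx
    exact ht.trans (ENNReal.toReal_mono (measure_ne_top μ _) (measure_mono hsub))

lemma avar_eq_of_forall_le (hmin : ∀ ω, ξ ω₀ ≤ ξ ω) {α : ℝ} (hα : 0 < α)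
    (hatom : α ≤ (μ {ω₀}).toReal) : avar μ α ξ = -ξ ω₀ := by
  have hint : ∫ t in (0 : ℝ)..α, qtl μ ξ t = ∫ _ in (0 : ℝ)..α, ξ ω₀ := by
    refine intervalIntegral.integral_congr_ae (Eventually.of_forall fun t ht => ?_)
    rw [Set.uIoc_of_le hα.le] at ht
    exact qtl_eq_of_forall_le hmin ht.1 (ht.2.trans hatom)
  rw [avar, hint, intervalIntegral.integral_const, smul_eq_mul]
  field_simp
  ring

lemma avar_eq_neg_iInf [Finite Ω] [Nonempty Ω] {α : ℝ} (hα : 0 < α)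
    (hatom : ∀ ω : Ω, α ≤ (μ {ω}).toReal) (ξ : Ω → ℝ) : avar μ α ξ = -⨅ ω, ξ ω := by
  obtain ⟨ω₀, hω₀⟩ := exists_eq_ciInf_of_finite (f := ξ)
  rw [← hω₀]
  exact avar_eq_of_forall_le (fun ω => hω₀ ▸ ciInf_le (Set.finite_range ξ).bddBelow ω) hα
    (hatom ω₀)

end Quantile

end Atoms

theorem stmt8_general [Fintype Ω] [MeasurableSpace Ω]
    (μ : Measure Ω) [IsProbabilityMeasure μ] {d : ℕ}
    (α : ℝ) (hα0 : 0 < α)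
    (hatom : ∀ ω : Ω, α ≤ (μ {ω}).toReal)
    (X : Ω → Set (Fin d → ℝ))
    (hXc : ∀ ω, IsClosed (X ω) ∧ IsLowerSet (X ω)) :
    selRisk μ 1 (fun _ => avar μ α) X = -⋂ ω : Ω, X ω := by
  have := nonempty_of_isProbabilityMeasure μ
  have havar := avar_eq_neg_iInf hα0 hatom
  apply subset_antisymm
  · refine closure_minimal ?_ (isClosed_iInter fun ω => (hXc ω).1).neg
    simp only [Set.iUnion_subset_iff]
    intro ξ hξ x hx
    rw [Set.mem_neg, Set.mem_iInter]
    intro ω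
    refine (hXc ω).2 (fun i => ?_) (forall_of_ae_of_le_measure_singleton hα0 hatom hξ.2 ω)
    have hle := ciInf_le (Set.finite_range fun ω => ξ ω i).bddBelow ω
    have hxi : avar μ α (fun ω => ξ ω i) ≤ x i := hx i
    rw [havar] at hxi
    rw [Pi.neg_apply]
    linarith
  · intro x hx
    rw [Set.mem_neg, Set.mem_iInter] at hx
    refine subset_closure (Set.mem_biUnion (x := fun _ => -x)
      ⟨memLp_const _, Eventually.of_forall hx⟩ fun i => ?_)
    simp [havar]

theorem stmt8 [Fintype Ω] [MeasurableSpace Ω] [MeasurableSingletonClass Ω]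
    (μ : Measure Ω) [IsProbabilityMeasure μ] {d : ℕ}
    (α : ℝ) (hα0 : 0 < α) (hα1 : α ≤ 1)
    (hatom : ∀ ω : Ω, α ≤ (μ {ω}).toReal)
    (X : Ω → Set (Fin d → ℝ))
    (hXc : ∀ ω, IsClosed (X ω) ∧ IsLowerSet (X ω))
    (hXi : (Sel μ 1 X).Nonempty) :
    selRisk μ 1 (fun _ => avar μ α) X = -⋂ ω : Ω, X ω :=
  stmt8_general μ α hα0 hatom X hXc
end
end

section
/- Let C be a p-integrable random vector in R^d, κ > 0, I_κ = R_−^d ∪ H_{−κ} with H_t = {x ∈ R^d : Σ x_i ≤ t}. Then (r(C) − I_κ) ∪ ρ_s(C + H_{−κ}) ⊆ ρ_s(C + I_κ) ⊆ ρ_s(C + H_0). -/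
open MeasureTheory Pointwise Filter
open scoped ENNReal NNReal

noncomputable section

variable {Ω : Type*}

/-- The half-space `H_t = {x : Σ_i x_i ≤ t}`. -/
def Hset (d : ℕ) (t : ℝ) : Set (Fin d → ℝ) := {x | ∑ i, x i ≤ t}

/-- The set `I_κ = ℝ_-^d ∪ H_{-κ}` of transfers with fixed transaction cost `κ`. -/
def Iset (d : ℕ) (κ : ℝ) : Set (Fin d → ℝ) := {x | x ≤ 0} ∪ Hset d (-κ)

theorem selRisk_mono [MeasurableSpace Ω] (μ : Measure Ω) (p : ℝ≥0∞) {d : ℕ}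
    (r : Fin d → (Ω → ℝ) → ℝ) {X Y : Ω → Set (Fin d → ℝ)} (h : ∀ ω, X ω ⊆ Y ω) :
    selRisk μ p r X ⊆ selRisk μ p r Y :=
  closure_mono <| Set.iUnion₂_mono' fun ξ hξ =>
    ⟨ξ, ⟨hξ.1, hξ.2.mono fun ω hω => h ω hω⟩, le_rfl⟩

theorem sub_mem_selRisk_add_image [MeasurableSpace Ω] (μ : Measure Ω) [IsFiniteMeasure μ]
    (p : ℝ≥0∞) {d : ℕ} (r : Fin d → (Ω → ℝ) → ℝ)
    (hcash : ∀ i (ξ : Ω → ℝ) (c : ℝ), r i (fun ω => ξ ω + c) = r i ξ - c)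
    {C : Ω → Fin d → ℝ} (hC : MemLp C p μ) {A : Set (Fin d → ℝ)} {x : Fin d → ℝ} (hx : x ∈ A) :
    (fun i => r i (fun ω => C ω i)) - x ∈ selRisk μ p r (fun ω => (fun x => C ω + x) '' A) := by
  refine subset_closure <| Set.mem_iUnion₂.2 ⟨fun ω => C ω + x, ⟨hC.add (memLp_const x),
    .of_forall fun ω => Set.mem_image_of_mem _ hx⟩, fun i => ?_⟩
  exact (hcash i (fun ω => C ω i) (x i)).le

theorem Iset_subset_Hset_zero (d : ℕ) {κ : ℝ} (hκ : 0 ≤ κ) : Iset d κ ⊆ Hset d 0 := by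
  rintro x (hx | hx)
  · exact Finset.sum_nonpos fun i _ => hx i
  · exact hx.trans (neg_nonpos.2 hκ)

theorem stmt13_general [MeasurableSpace Ω] (μ : Measure Ω) [IsProbabilityMeasure μ] (p : ℝ≥0∞) {d : ℕ}
    (r : Fin d → (Ω → ℝ) → ℝ)
    (hcash : ∀ i (ξ : Ω → ℝ) (c : ℝ), r i (fun ω => ξ ω + c) = r i ξ - c)
    (C : Ω → Fin d → ℝ) (hC : MemLp C p μ)
    (κ : ℝ) (hκ : 0 < κ) :
    ((fun x => (fun i => r i (fun ω => C ω i)) - x) '' Iset d κ) ∪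
        selRisk μ p r (fun ω => (fun x => C ω + x) '' Hset d (-κ)) ⊆
      selRisk μ p r (fun ω => (fun x => C ω + x) '' Iset d κ) ∧
    selRisk μ p r (fun ω => (fun x => C ω + x) '' Iset d κ) ⊆
      selRisk μ p r (fun ω => (fun x => C ω + x) '' Hset d 0) := by
  refine ⟨Set.union_subset ?_ ?_, ?_⟩
  · rintro _ ⟨x, hx, rfl⟩
    exact sub_mem_selRisk_add_image μ p r hcash hC hx
  · exact selRisk_mono μ p r fun ω => Set.image_mono Set.subset_union_right
  · exact selRisk_mono μ p r fun ω => Set.image_mono (Iset_subset_Hset_zero d hκ.le)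

theorem stmt13 [MeasurableSpace Ω] (μ : Measure Ω) [IsProbabilityMeasure μ] (p : ℝ≥0∞) {d : ℕ}
    (r : Fin d → (Ω → ℝ) → ℝ)
    (hmono : ∀ i (ξ η : Ω → ℝ), (∀ᵐ ω ∂μ, ξ ω ≤ η ω) → r i η ≤ r i ξ)
    (hcash : ∀ i (ξ : Ω → ℝ) (c : ℝ), r i (fun ω => ξ ω + c) = r i ξ - c)
    (hzero : ∀ i, r i (fun _ => 0) = 0)
    (C : Ω → Fin d → ℝ) (hC : MemLp C p μ)
    (κ : ℝ) (hκ : 0 < κ) :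
    ((fun x => (fun i => r i (fun ω => C ω i)) - x) '' Iset d κ) ∪
        selRisk μ p r (fun ω => (fun x => C ω + x) '' Hset d (-κ)) ⊆
      selRisk μ p r (fun ω => (fun x => C ω + x) '' Iset d κ) ∧
    selRisk μ p r (fun ω => (fun x => C ω + x) '' Iset d κ) ⊆
      selRisk μ p r (fun ω => (fun x => C ω + x) '' Hset d 0) :=
  stmt13_general μ p r hcash C hC κ hκ
end
end

section
/- Let all d components of r be the same finite convex monetary risk measure ρ on L^p. Then for any p-integrable random vector C and t ∈ R, the selection risk measure of C + H_t equals the half-space −H_{t − dρ(D/d)} = {x ∈ R^d : Σ x_i ≥ dρ(D/d) − t}, where D = C^{(1)} + ... + C^{(d)}. -/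
open MeasureTheory Pointwise Filter
open scoped ENNReal NNReal

noncomputable section

variable {Ω : Type*}

/-!
For a selection `ξ` of `C + H_t`, the componentwise average of `ξ` is a.s. at most
`(D + t) / d`, so monotonicity and Jensen's inequality for the convex `ρ` give
`d ρ((D + t) / d) ≤ Σ_i ρ(ξ_i)`; by cash invariance the left side is `d ρ(D / d) - t`.
Conversely, a point `x` of that half-space is attained exactly by the selection
`ξ_i = D / d + ρ(D / d) - x_i`, whose component risks are `x_i` by cash invariance.
-/

theorem image_add_Hset {d : ℕ} (c : Fin d → ℝ) (t : ℝ) :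
    (fun x => c + x) '' Hset d t = Hset d (∑ i, c i + t) := by
  ext y
  simp only [Set.image_add_left, Set.mem_preimage, Hset, Set.mem_ofPred_eq, Pi.add_apply,
    Pi.neg_apply, Finset.sum_add_distrib, Finset.sum_neg_distrib]
  constructor <;> intro h <;> linarith

theorem convexOn_univ_of_forall_le {ρ : (Ω → ℝ) → ℝ}
    (hconv : ∀ (ξ η : Ω → ℝ) (t : ℝ), 0 ≤ t → t ≤ 1 →
      ρ (fun ω => t * ξ ω + (1 - t) * η ω) ≤ t * ρ ξ + (1 - t) * ρ η) :
    ConvexOn ℝ Set.univ ρ := by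
  refine ⟨convex_univ, fun ξ _ η _ a b ha hb hab => ?_⟩
  obtain rfl : b = 1 - a := by linarith
  exact hconv ξ η a ha (by linarith)

theorem ConvexOn.map_fintypeAverage_le {E ι : Type*} [AddCommGroup E] [Module ℝ E]
    [Fintype ι] [Nonempty ι] {f : E → ℝ} (hf : ConvexOn ℝ Set.univ f) (x : ι → E) :
    f ((Fintype.card ι : ℝ)⁻¹ • ∑ i, x i) ≤ (Fintype.card ι : ℝ)⁻¹ * ∑ i, f (x i) := by
  have hcard : (0 : ℝ) < Fintype.card ι := by exact_mod_cast Fintype.card_pos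
  have h := hf.map_sum_le (t := Finset.univ) (w := fun _ => (Fintype.card ι : ℝ)⁻¹) (p := x)
    (fun _ _ => by positivity) (by simp [Finset.card_univ, hcard.ne'])
    (fun _ _ => Set.mem_univ _)
  simpa only [← Finset.smul_sum, smul_eq_mul, ← Finset.mul_sum] using h

section HalfSpace

variable [MeasurableSpace Ω] {μ : Measure Ω} {p : ℝ≥0∞} {d : ℕ} {ρ : (Ω → ℝ) → ℝ}

theorem selRisk_Hset_subset (hd : 0 < d) (hρ : ConvexOn ℝ Set.univ ρ)
    (hmono : ∀ (ξ η : Ω → ℝ), (∀ᵐ ω ∂μ, ξ ω ≤ η ω) → ρ η ≤ ρ ξ) (S : Ω → ℝ) :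
    selRisk μ p (fun _ => ρ) (fun ω => Hset d (S ω)) ⊆
      {x | (d : ℝ) * ρ (fun ω => S ω / d) ≤ ∑ i, x i} := by
  have hclosed : IsClosed {x : Fin d → ℝ | (d : ℝ) * ρ (fun ω => S ω / d) ≤ ∑ i, x i} :=
    isClosed_le continuous_const (continuous_finsetSum _ fun i _ => continuous_apply i)
  refine closure_minimal (Set.iUnion₂_subset fun ξ hξ x hx => ?_) hclosed
  have : Nonempty (Fin d) := ⟨⟨0, hd⟩⟩
  have hd' : (0 : ℝ) < d := by exact_mod_cast hd
  set avg : Ω → ℝ := (d : ℝ)⁻¹ • ∑ i, fun ω => ξ ω i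
  have havg : ∀ᵐ ω ∂μ, avg ω ≤ S ω / d := by
    filter_upwards [hξ.2] with ω hω
    simp only [avg, Pi.smul_apply, Finset.sum_apply, smul_eq_mul, inv_mul_eq_div]
    exact div_le_div_of_nonneg_right hω hd'.le
  have hjensen : ρ avg ≤ (d : ℝ)⁻¹ * ∑ i, ρ (fun ω => ξ ω i) := by
    simpa only [Fintype.card_fin] using hρ.map_fintypeAverage_le (fun i ω => ξ ω i)
  calc (d : ℝ) * ρ (fun ω => S ω / d)
      ≤ d * ((d : ℝ)⁻¹ * ∑ i, ρ (fun ω => ξ ω i)) := by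
        gcongr; exact (hmono _ _ havg).trans hjensen
    _ = ∑ i, ρ (fun ω => ξ ω i) := by field_simp
    _ ≤ ∑ i, x i := Finset.sum_le_sum fun i _ => hx i

theorem subset_selRisk_Hset [IsFiniteMeasure μ] (hd : 0 < d)
    (hcash : ∀ (ξ : Ω → ℝ) (c : ℝ), ρ (fun ω => ξ ω + c) = ρ ξ - c)
    {S : Ω → ℝ} (hS : MemLp S p μ) :
    {x | (d : ℝ) * ρ (fun ω => S ω / d) ≤ ∑ i, x i} ⊆
      selRisk μ p (fun _ => ρ) (fun ω => Hset d (S ω)) := by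
  intro x hx
  set r := ρ (fun ω => S ω / d)
  refine subset_closure (Set.mem_biUnion (x := fun ω i => S ω / d + (r - x i)) ⟨?_, ?_⟩ ?_)
  · refine memLp_pi_iff.2 fun i => ?_
    exact (hS.mul_const (d : ℝ)⁻¹).add (memLp_const (r - x i))
  · refine Eventually.of_forall fun ω => ?_
    change ∑ i, (S ω / d + (r - x i)) ≤ S ω
    simp only [Finset.sum_add_distrib, Finset.sum_sub_distrib, Finset.sum_const,
      Finset.card_univ, Fintype.card_fin, nsmul_eq_mul]
    field_simp
    linarith [hx.out]
  · intro i
    simp only [hcash, r]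
    linarith

theorem selRisk_Hset [IsFiniteMeasure μ] (hd : 0 < d) (hρ : ConvexOn ℝ Set.univ ρ)
    (hmono : ∀ (ξ η : Ω → ℝ), (∀ᵐ ω ∂μ, ξ ω ≤ η ω) → ρ η ≤ ρ ξ)
    (hcash : ∀ (ξ : Ω → ℝ) (c : ℝ), ρ (fun ω => ξ ω + c) = ρ ξ - c)
    {S : Ω → ℝ} (hS : MemLp S p μ) :
    selRisk μ p (fun _ => ρ) (fun ω => Hset d (S ω)) =
      {x | (d : ℝ) * ρ (fun ω => S ω / d) ≤ ∑ i, x i} :=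
  (selRisk_Hset_subset hd hρ hmono S).antisymm (subset_selRisk_Hset hd hcash hS)

end HalfSpace

theorem stmt17_general [MeasurableSpace Ω] (μ : Measure Ω) [IsProbabilityMeasure μ] (p : ℝ≥0∞)
    {d : ℕ} (hd : 0 < d)
    (ρ : (Ω → ℝ) → ℝ)
    (hconv : ∀ (ξ η : Ω → ℝ) (t : ℝ), 0 ≤ t → t ≤ 1 →
      ρ (fun ω => t * ξ ω + (1 - t) * η ω) ≤ t * ρ ξ + (1 - t) * ρ η)
    (hmono : ∀ (ξ η : Ω → ℝ), (∀ᵐ ω ∂μ, ξ ω ≤ η ω) → ρ η ≤ ρ ξ)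
    (hcash : ∀ (ξ : Ω → ℝ) (c : ℝ), ρ (fun ω => ξ ω + c) = ρ ξ - c)
    (C : Ω → Fin d → ℝ) (hC : MemLp C p μ) (t : ℝ) :
    selRisk μ p (fun _ => ρ) (fun ω => (fun x => C ω + x) '' Hset d t) =
      {x : Fin d → ℝ | (d : ℝ) * ρ (fun ω => (∑ i, C ω i) / (d : ℝ)) - t ≤ ∑ i, x i} := by
  have hD : MemLp (fun ω => ∑ i, C ω i + t) p μ :=
    (memLp_finsetSum _ fun i _ => hC.eval i).add (memLp_const t)
  have hcash_D : (d : ℝ) * ρ (fun ω => (∑ i, C ω i + t) / d) =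
      d * ρ (fun ω => (∑ i, C ω i) / d) - t := by
    simp only [add_div, hcash]
    field_simp
  simp only [image_add_Hset]
  rw [selRisk_Hset hd (convexOn_univ_of_forall_le hconv) hmono hcash hD, hcash_D]

theorem stmt17 [MeasurableSpace Ω] (μ : Measure Ω) [IsProbabilityMeasure μ] (p : ℝ≥0∞)
    {d : ℕ} (hd : 0 < d)
    (ρ : (Ω → ℝ) → ℝ)
    (hconv : ∀ (ξ η : Ω → ℝ) (t : ℝ), 0 ≤ t → t ≤ 1 →
      ρ (fun ω => t * ξ ω + (1 - t) * η ω) ≤ t * ρ ξ + (1 - t) * ρ η)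
    (hmono : ∀ (ξ η : Ω → ℝ), (∀ᵐ ω ∂μ, ξ ω ≤ η ω) → ρ η ≤ ρ ξ)
    (hcash : ∀ (ξ : Ω → ℝ) (c : ℝ), ρ (fun ω => ξ ω + c) = ρ ξ - c)
    (hzero : ρ (fun _ => 0) = 0)
    (C : Ω → Fin d → ℝ) (hC : MemLp C p μ) (t : ℝ) :
    selRisk μ p (fun _ => ρ) (fun ω => (fun x => C ω + x) '' Hset d t) =
      {x : Fin d → ℝ | (d : ℝ) * ρ (fun ω => (∑ i, C ω i) / (d : ℝ)) - t ≤ ∑ i, x i} :=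
  stmt17_general μ p hd ρ hconv hmono hcash C hC t
end
end
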